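/- Let (a, b) be a point in the interior of the positive definiteness region 𝒫 = 𝒫₁ ∪ 𝒫₂, where 𝒫₁ = {(a,b) ∈ ℝ² : a²/8 + (b − 1/4)² ≤ 1/16} and 𝒫₂ = {(a,b) ∈ ℝ² : a²/8 + (b − 1/4)² ≥ 1/16 and |a| − 1/2 ≤ b ≤ 1/6}, and set G(z) = a z + b z². Then 1 + 2 Re G(z) > 0 for all z ∈ 𝔻, and there exists a constant C(a,b) ≥ 0, with C(a,b) > 0 unless (a,b) = (0,0), together with constants C' > 0 and r₀ ∈ (0,1), such that for all r ∈ (r₀, 1): | N_G(r) − r²/(1−r²) + C(a,b) | ≤ C' (1−r²). -/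

import Mathlib

/-!
On the unit circle `1 + 2 Re G(e^{iθ}) = 1 + 2a cos θ + 2b cos 2θ` is the spectral density of
the covariance. It is nonnegative on `𝒫`, so for `(a, b)` in the interior it is bounded below by
some `δ > 0`, and by the minimum principle so is `1 + 2 Re G` on the closed disk. The integrand
of `N_G` is the hyperbolic density `1/(1-|z|²)²`, whose integral over `𝔻(r)` is
`π r²/(1 - r²)`, minus `w = |G'|²/(1 + 2 Re G)²`, which is continuous and hence bounded by some
`M` on the closed disk. With `C(a,b) = π⁻¹ ∫_𝔻 w`, the error is `π⁻¹` times the integral of `w`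
over the annulus `r < |z| < 1` of area `π(1 - r²)`, hence at most `M (1 - r²)`; and
`C(a,b) > 0` as soon as `G' = a + 2bz` is not identically zero.
-/

open Complex MeasureTheory

/-- The Edelman–Kostlan integral: the expected number of zeros in `𝔻(r)` of the GAF
associated with `G(z) = Σ_{k≥1} conj(γ(k)) z^k`. -/
noncomputable def NG (G : ℂ → ℂ) (r : ℝ) : ℝ :=
  (1 / Real.pi) * ∫ z in Metric.ball (0 : ℂ) r,
    (1 / (1 - ‖z‖ ^ 2) ^ 2 - ‖deriv G z‖ ^ 2 / (1 + 2 * (G z).re) ^ 2)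

/-- The positive definiteness region `𝒫 = 𝒫₁ ∪ 𝒫₂` for the covariance
`γ(0)=1, γ(±1)=a, γ(±2)=b`. -/
def posDefRegion : Set (ℝ × ℝ) :=
  {p | p.1 ^ 2 / 8 + (p.2 - 1 / 4) ^ 2 ≤ 1 / 16} ∪
  {p | 1 / 16 ≤ p.1 ^ 2 / 8 + (p.2 - 1 / 4) ^ 2 ∧ |p.1| - 1 / 2 ≤ p.2 ∧ p.2 ≤ 1 / 6}

open Metric Set
open scoped Real

lemma integral_ball_comp_norm (f : ℝ → ℝ) {r : ℝ} (hr : 0 ≤ r) :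
    ∫ z in ball (0 : ℂ) r, f ‖z‖ = 2 * π * ∫ t in 0..r, t * f t := by
  have hind : (ball (0 : ℂ) r).indicator (fun z => f ‖z‖) =
      fun z => (Iio r).indicator f ‖z‖ := by
    ext z
    by_cases hz : ‖z‖ < r <;> simp [indicator, hz]
  have hIoi : ∫ t in Ioi (0 : ℝ), t ^ (2 - 1) • (Iio r).indicator f t =
      ∫ t in 0..r, t * f t := by
    simp_rw [Nat.add_one_sub_one, pow_one, smul_eq_mul,
      fun t => (indicator_mul_right (Iio r) (fun t => t) f (i := t)).symm]
    rw [setIntegral_indicator measurableSet_Iio, Ioi_inter_Iio,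
      intervalIntegral.integral_of_le hr, integral_Ioc_eq_integral_Ioo]
  rw [← integral_indicator measurableSet_ball, hind, integral_fun_norm_addHaar,
    Complex.finrank_real_complex, hIoi, measureReal_def, Complex.volume_ball]
  simp
  ring

lemma integral_ball_one_div_one_sub_norm_sq_sq {r : ℝ} (hr₀ : 0 ≤ r) (hr₁ : r < 1) :
    ∫ z in ball (0 : ℂ) r, 1 / (1 - ‖z‖ ^ 2) ^ 2 = π * r ^ 2 / (1 - r ^ 2) := by
  have hpos : ∀ t ∈ uIcc 0 r, 0 < 1 - t ^ 2 := fun t ht => by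
    rw [uIcc_of_le hr₀] at ht
    nlinarith [ht.1, ht.2]
  have hderiv : ∀ t ∈ uIcc 0 r,
      HasDerivAt (fun t : ℝ => (2 * (1 - t ^ 2))⁻¹) (t * (1 / (1 - t ^ 2) ^ 2)) t := by
    intro t ht
    have := hpos t ht
    refine ((((hasDerivAt_pow 2 t).const_sub 1).const_mul (2 : ℝ)).inv
      (by positivity)).congr_deriv ?_
    field_simp
    ring
  have hcont : ContinuousOn (fun t : ℝ => t * (1 / (1 - t ^ 2) ^ 2)) (uIcc 0 r) :=
    continuousOn_id.mul <| continuousOn_const.div (by fun_prop) fun t ht => by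
      have := hpos t ht
      positivity
  rw [integral_ball_comp_norm (fun t => 1 / (1 - t ^ 2) ^ 2) hr₀,
    intervalIntegral.integral_eq_sub_of_hasDerivAt hderiv hcont.intervalIntegrable]
  have := hpos r right_mem_uIcc
  field_simp
  ring

lemma integrableOn_ball_one_div_one_sub_norm_sq_sq {r : ℝ} (hr : r < 1) :
    IntegrableOn (fun z : ℂ => 1 / (1 - ‖z‖ ^ 2) ^ 2) (ball 0 r) := by
  refine (ContinuousOn.integrableOn_compact (isCompact_closedBall 0 r) ?_).mono_set
    ball_subset_closedBall
  refine continuousOn_const.div (by fun_prop) fun z hz => ?_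
  have : ‖z‖ < 1 := (mem_closedBall_zero_iff.mp hz).trans_lt hr
  have : ‖z‖ ^ 2 < 1 := by nlinarith [norm_nonneg z]
  exact pow_ne_zero _ (by linarith)

lemma measureReal_ball_sdiff_ball (x : ℂ) {r R : ℝ} (hr : 0 ≤ r) (hrR : r ≤ R) :
    volume.real (ball x R \ ball x r) = π * (R ^ 2 - r ^ 2) := by
  rw [measureReal_sdiff (ball_subset_ball hrR) measurableSet_ball, measureReal_def,
    measureReal_def, Complex.volume_ball, Complex.volume_ball]
  simp [hr, hr.trans hrR]
  ring

lemma IsOpen.setIntegral_pos_of_continuousOn {X : Type*} [TopologicalSpace X]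
    [MeasurableSpace X] [OpensMeasurableSpace X] {μ : Measure X} [μ.IsOpenPosMeasure]
    {U : Set X} {f : X → ℝ} {x : X} (hU : IsOpen U) (hf : ContinuousOn f U)
    (hfi : IntegrableOn f U μ) (hf₀ : ∀ y ∈ U, 0 ≤ f y) (hx : x ∈ U) (hfx : f x ≠ 0) :
    0 < ∫ y in U, f y ∂μ := by
  rw [setIntegral_pos_iff_support_of_nonneg_ae
    (ae_restrict_of_forall_mem hU.measurableSet hf₀) hfi]
  refine ((hf.isOpen_inter_preimage hU isOpen_compl_singleton).measure_pos μ
    ⟨x, hx, hfx⟩).trans_le (measure_mono ?_)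
  exact fun y ⟨hyU, hy⟩ => ⟨hy, hyU⟩

noncomputable def deficitDensity (G : ℂ → ℂ) (z : ℂ) : ℝ :=
  ‖deriv G z‖ ^ 2 / (1 + 2 * (G z).re) ^ 2

lemma deficitDensity_nonneg (G : ℂ → ℂ) (z : ℂ) : 0 ≤ deficitDensity G z := by
  unfold deficitDensity
  positivity

lemma continuousOn_deficitDensity {G : ℂ → ℂ} {s : Set ℂ} (hG : ContDiff ℂ 1 G)
    (hs : ∀ z ∈ s, 1 + 2 * (G z).re ≠ 0) : ContinuousOn (deficitDensity G) s :=
  (hG.continuous_deriv_one.norm.pow 2).continuousOn.div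
    ((continuous_const.add (continuous_const.mul (continuous_re.comp hG.continuous))).pow
      2).continuousOn
    fun z hz => pow_ne_zero 2 (hs z hz)

lemma setIntegral_deficitDensity_pos {G : ℂ → ℂ} {U : Set ℂ} {z : ℂ} (hU : IsOpen U)
    (hG : ContDiff ℂ 1 G) (hU₀ : ∀ w ∈ U, 1 + 2 * (G w).re ≠ 0)
    (hint : IntegrableOn (deficitDensity G) U) (hz : z ∈ U) (hGz : deriv G z ≠ 0) :
    0 < ∫ w in U, deficitDensity G w :=
  hU.setIntegral_pos_of_continuousOn (continuousOn_deficitDensity hG hU₀) hint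
    (fun w _ => deficitDensity_nonneg G w) hz
    (div_ne_zero (pow_ne_zero 2 (norm_ne_zero_iff.2 hGz)) (pow_ne_zero 2 (hU₀ z hz)))

lemma NG_eq_sub_integral_deficitDensity {G : ℂ → ℂ} {r : ℝ} (hr₀ : 0 ≤ r) (hr₁ : r < 1)
    (hG : IntegrableOn (deficitDensity G) (ball 0 r)) :
    NG G r = r ^ 2 / (1 - r ^ 2) - π⁻¹ * ∫ z in ball 0 r, deficitDensity G z := by
  change 1 / π * ∫ z in ball 0 r, (1 / (1 - ‖z‖ ^ 2) ^ 2 - deficitDensity G z) = _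
  rw [integral_sub (integrableOn_ball_one_div_one_sub_norm_sq_sq hr₁) hG,
    integral_ball_one_div_one_sub_norm_sq_sq hr₀ hr₁]
  field_simp

lemma abs_NG_sub_add_integral_deficitDensity_le {G : ℂ → ℂ} {M r : ℝ}
    (hG : IntegrableOn (deficitDensity G) (ball 0 1))
    (hM : ∀ z ∈ ball (0 : ℂ) 1, deficitDensity G z ≤ M) (hr₀ : 0 ≤ r) (hr₁ : r < 1) :
    |NG G r - r ^ 2 / (1 - r ^ 2) + π⁻¹ * ∫ z in ball 0 1, deficitDensity G z|
      ≤ M * (1 - r ^ 2) := by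
  have hsub : ball (0 : ℂ) r ⊆ ball 0 1 := ball_subset_ball hr₁.le
  have hannulus : NG G r - r ^ 2 / (1 - r ^ 2) + π⁻¹ * ∫ z in ball 0 1, deficitDensity G z
      = π⁻¹ * ∫ z in ball 0 1 \ ball 0 r, deficitDensity G z := by
    rw [NG_eq_sub_integral_deficitDensity hr₀ hr₁ (hG.mono_set hsub),
      setIntegral_sdiff measurableSet_ball hG hsub]
    ring
  have hbound : |∫ z in ball 0 1 \ ball 0 r, deficitDensity G z|
      ≤ M * volume.real (ball (0 : ℂ) 1 \ ball 0 r) := by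
    rw [← Real.norm_eq_abs]
    refine norm_setIntegral_le_of_norm_le_const
      ((measure_mono sdiff_subset).trans_lt measure_ball_lt_top) fun z hz => ?_
    rw [Real.norm_of_nonneg (deficitDensity_nonneg G z)]
    exact hM z hz.1
  rw [measureReal_ball_sdiff_ball 0 hr₀ hr₁.le, one_pow] at hbound
  rw [hannulus, abs_mul, abs_inv, abs_of_pos Real.pi_pos]
  calc π⁻¹ * |∫ z in ball 0 1 \ ball 0 r, deficitDensity G z|
      ≤ π⁻¹ * (M * (π * (1 - r ^ 2))) := by gcongr
    _ = M * (1 - r ^ 2) := by field_simp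

/-- The spectral density `1 + 2a cos θ + 2b cos 2θ` of the covariance, in the variable
`c = cos θ`; it is the value of `1 + 2 Re G` at `e^{iθ}`. -/
def spectralDensity (a b c : ℝ) : ℝ := 1 + 2 * a * c + 2 * b * (2 * c ^ 2 - 1)

lemma spectralDensity_nonneg {a b c : ℝ} (h : (a, b) ∈ posDefRegion)
    (hc : c ∈ Icc (-1 : ℝ) 1) : 0 ≤ spectralDensity a b c := by
  obtain ⟨hc₁, hc₂⟩ := hc
  unfold spectralDensity
  rcases h with h | ⟨h₁, h₂, h₃⟩
  · have ha : a ^ 2 ≤ 4 * b * (1 - 2 * b) := by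
      simp only [mem_ofPred_eq] at h
      linarith
    rcases (show 0 ≤ b by nlinarith [sq_nonneg a]).eq_or_lt with rfl | hb
    · obtain rfl : a = 0 := by nlinarith
      norm_num
    -- `4b` times the density is `(4bc + a)² + 4b(1 - 2b) - a²`
    · nlinarith [sq_nonneg (4 * b * c + a)]
  · dsimp only at h₁ h₂ h₃
    have hq₁ : 0 ≤ 1 + 2 * a + 2 * b := by linarith [neg_abs_le a]
    have hq₂ : 0 ≤ 1 - 2 * a + 2 * b := by linarith [le_abs_self a]
    have hcp : 0 ≤ 1 + c := by linarith
    have hcm : 0 ≤ 1 - c := by linarith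
    rcases le_or_gt b 0 with hb | hb
    · nlinarith [mul_nonneg hcp hq₁, mul_nonneg hcm hq₂,
        mul_nonneg (neg_nonneg.2 hb) (mul_nonneg hcp hcm)]
    -- outside the ellipse `b ≤ 1/6` puts the vertex `-a/(4b)` of the parabola outside `(-1, 1)`
    · have hsq : 16 * b ^ 2 ≤ a ^ 2 := by nlinarith
      rcases le_or_gt a 0 with ha | ha
      · have : a + 4 * b ≤ 0 := by nlinarith
        nlinarith [mul_nonneg hcm
          (by nlinarith [mul_nonneg hb.le hcm] : 0 ≤ -2 * a - 4 * b * (c + 1))]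
      · have : 4 * b ≤ a := by nlinarith
        nlinarith [mul_nonneg hcp
          (by nlinarith [mul_nonneg hb.le hcp] : 0 ≤ 2 * a + 4 * b * (c - 1))]

lemma exists_pos_le_spectralDensity {a b : ℝ} (hab : (a, b) ∈ interior posDefRegion) :
    ∃ δ > 0, ∀ c ∈ Icc (-1 : ℝ) 1, δ ≤ spectralDensity a b c := by
  obtain ⟨ε, hε, hball⟩ := Metric.isOpen_iff.mp isOpen_interior _ hab
  refine ⟨7 * ε / 16, by positivity, fun c hc => ?_⟩
  -- Moving `(a, b)` by `-(ε/2) (c, 2c² - 1)` stays in `𝒫` and lowers the density at `c`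
  -- by `ε (c² + (2c² - 1)²) ≥ 7ε/16`.
  have hT : |2 * c ^ 2 - 1| ≤ 1 :=
    abs_le.mpr ⟨by nlinarith [hc.1, hc.2], by nlinarith [hc.1, hc.2]⟩
  have hmem : (a - ε / 2 * c, b - ε / 2 * (2 * c ^ 2 - 1)) ∈ posDefRegion := by
    refine interior_subset (hball ?_)
    rw [mem_ball, Prod.dist_eq, Real.dist_eq, Real.dist_eq, sub_sub_cancel_left,
      sub_sub_cancel_left, abs_neg, abs_neg, abs_mul, abs_mul, abs_of_pos (half_pos hε)]
    have := abs_le.mpr hc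
    exact max_lt (by nlinarith) (by nlinarith)
  have h := spectralDensity_nonneg hmem hc
  unfold spectralDensity at h ⊢
  nlinarith [mul_nonneg hε.le (sq_nonneg (c ^ 2 - 3 / 8))]

/- The minimum principle for the harmonic function `1 + 2 Re G`, by hand: for `b ≥ 0` raising
`(Im z)²` to its value on the circle only lowers it, and for `b < 0` it is at least
`1 + 2a Re z + 2b`, a convex combination of the densities at `±1`. -/
lemma le_one_add_two_re_of_forall_le_spectralDensity {a b δ : ℝ}
    (hδ : ∀ c ∈ Icc (-1 : ℝ) 1, δ ≤ spectralDensity a b c) {z : ℂ} (hz : ‖z‖ ≤ 1) :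
    δ ≤ 1 + 2 * ((a : ℂ) * z + (b : ℂ) * z ^ 2).re := by
  have hre : ((a : ℂ) * z + (b : ℂ) * z ^ 2).re = a * z.re + b * (z.re ^ 2 - z.im ^ 2) := by
    simp [sq]
  have hz2 : z.re ^ 2 + z.im ^ 2 ≤ 1 := by
    have : ‖z‖ ^ 2 = z.re ^ 2 + z.im ^ 2 := by rw [Complex.sq_norm, normSq_apply]; ring
    nlinarith [norm_nonneg z]
  have hx : z.re ∈ Icc (-1 : ℝ) 1 :=
    ⟨by nlinarith [sq_nonneg z.im], by nlinarith [sq_nonneg z.im]⟩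
  rw [hre]
  rcases le_or_gt 0 b with hb | hb
  · have h := hδ _ hx
    unfold spectralDensity at h
    nlinarith [mul_nonneg hb (sub_nonneg.2 hz2)]
  · have h₁ := hδ 1 ⟨by norm_num, le_rfl⟩
    have h₂ := hδ (-1) ⟨le_rfl, by norm_num⟩
    unfold spectralDensity at h₁ h₂
    nlinarith [mul_nonneg (neg_nonneg.2 hb.le) (by nlinarith : 0 ≤ 1 - z.re ^ 2 + z.im ^ 2),
      mul_nonneg (by linarith [hx.1] : 0 ≤ 1 + z.re) (sub_nonneg.2 h₁),
      mul_nonneg (by linarith [hx.2] : 0 ≤ 1 - z.re) (sub_nonneg.2 h₂)]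

lemma one_add_two_re_quadratic_pos {a b : ℝ} (hab : (a, b) ∈ interior posDefRegion) {z : ℂ}
    (hz : ‖z‖ ≤ 1) : 0 < 1 + 2 * ((a : ℂ) * z + (b : ℂ) * z ^ 2).re := by
  obtain ⟨δ, hδ, hδc⟩ := exists_pos_le_spectralDensity hab
  exact hδ.trans_le (le_one_add_two_re_of_forall_le_spectralDensity hδc hz)

lemma hasDerivAt_quadratic (a b z : ℂ) :
    HasDerivAt (fun z => a * z + b * z ^ 2) (a + 2 * b * z) z :=
  (((hasDerivAt_id z).const_mul a).add ((hasDerivAt_pow 2 z).const_mul b)).congr_deriv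
    (by simp; ring)

lemma exists_mem_ball_add_two_mul_ne_zero {a b : ℂ} (hab : (a, b) ≠ (0, 0)) :
    ∃ z ∈ ball (0 : ℂ) 1, a + 2 * b * z ≠ 0 := by
  by_cases ha : a = 0
  · refine ⟨1 / 2, by norm_num, ?_⟩
    subst ha
    simpa using fun hb : b = 0 => hab (by rw [hb])
  · exact ⟨0, mem_ball_self one_pos, by simpa using ha⟩

theorem stmt_7 (a b : ℝ) (hab : (a, b) ∈ interior posDefRegion)
    (G : ℂ → ℂ) (hG : ∀ z : ℂ, G z = (a : ℂ) * z + (b : ℂ) * z ^ 2) :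
    (∀ z ∈ Metric.ball (0 : ℂ) 1, 0 < 1 + 2 * (G z).re) ∧
    ∃ Cab : ℝ, 0 ≤ Cab ∧ ((a, b) ≠ (0, 0) → 0 < Cab) ∧
      ∃ C' > 0, ∃ r₀ ∈ Set.Ioo (0 : ℝ) 1, ∀ r ∈ Set.Ioo r₀ 1,
        |NG G r - r ^ 2 / (1 - r ^ 2) + Cab| ≤ C' * (1 - r ^ 2) := by
  have hG' : G = fun z => (a : ℂ) * z + (b : ℂ) * z ^ 2 := funext hG
  have hG₁ : ContDiff ℂ 1 G := by rw [hG']; fun_prop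
  have hpos : ∀ z ∈ closedBall (0 : ℂ) 1, 0 < 1 + 2 * (G z).re := fun z hz =>
    hG z ▸ one_add_two_re_quadratic_pos hab (mem_closedBall_zero_iff.mp hz)
  have hcont := continuousOn_deficitDensity hG₁ fun z hz => (hpos z hz).ne'
  have hint : IntegrableOn (deficitDensity G) (ball 0 1) :=
    (hcont.integrableOn_compact (isCompact_closedBall 0 1)).mono_set ball_subset_closedBall
  obtain ⟨M, hM⟩ := (isCompact_closedBall (0 : ℂ) 1).exists_bound_of_continuousOn hcont
  have hM₀ : 0 ≤ M := (norm_nonneg _).trans (hM 0 (mem_closedBall_self zero_le_one))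
  refine ⟨fun z hz => hpos z (ball_subset_closedBall hz),
    π⁻¹ * ∫ z in ball 0 1, deficitDensity G z, ?_, fun hab₀ => ?_,
    M + 1, by positivity, 1 / 2, by norm_num, fun r hr => ?_⟩
  · exact mul_nonneg (inv_nonneg.2 Real.pi_pos.le)
      (setIntegral_nonneg measurableSet_ball fun z _ => deficitDensity_nonneg G z)
  · obtain ⟨z, hz, hz₀⟩ := exists_mem_ball_add_two_mul_ne_zero (a := a) (b := b)
      (by simpa [Prod.ext_iff] using hab₀)
    refine mul_pos (inv_pos.2 Real.pi_pos) (setIntegral_deficitDensity_pos isOpen_ball hG₁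
      (fun w hw => (hpos w (ball_subset_closedBall hw)).ne') hint hz ?_)
    rwa [hG', (hasDerivAt_quadratic _ _ z).deriv]
  · calc _ ≤ M * (1 - r ^ 2) := abs_NG_sub_add_integral_deficitDensity_le hint
          (fun z hz => (le_abs_self _).trans (hM z (ball_subset_closedBall hz)))
          (by linarith [hr.1]) hr.2
      _ ≤ (M + 1) * (1 - r ^ 2) :=
          mul_le_mul_of_nonneg_right (by linarith) (by nlinarith [hr.1, hr.2])
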